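/- The set of integer points (x,y,z) ∈ ℤ³ satisfying 2x² + 2y² + 2z² + xy + 2xz + 2yz − 3x − 3y − 3z + 1 ≤ 0 is exactly {(1,1,0), (1,0,0), (0,1,0), (0,0,1)}, and the left-hand side vanishes at each of these four points. (These four points are the vertices of the tetrahedron T²_{(0,0,0)}.) -/

import Mathlib

/-!
Completing the square in two of the variables bounds the quadric `q2` below by a quadratic
in the third one:
`8 q2 = 4 (3x² - 3x - 1) + (x + 4y + 2z - 3)² + 3 (x + 2z - 1)²` and
`20 q2 = 4 (6z² - 3z - 4) + (5x + 5y + 4z - 6)² + 15 (x - y)²`, and `q2` is symmetric in `x, y`.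
So on the solid ellipsoid every coordinate `t` satisfies `t (t - 1) < 2`, which for an integer
means `t ∈ {0, 1}`; of the eight points of `{0, 1}³` exactly the four vertices lie in it.
-/

section Quadric

variable {R : Type*} [CommRing R]

def q2 (x y z : R) : R :=
  2 * x ^ 2 + 2 * y ^ 2 + 2 * z ^ 2 + x * y + 2 * x * z + 2 * y * z - 3 * x - 3 * y - 3 * z + 1

theorem q2_swap (x y z : R) : q2 x y z = q2 y x z := by
  unfold q2; ring

theorem eight_mul_q2 (x y z : R) :
    8 * q2 x y z =
      4 * (3 * x ^ 2 - 3 * x - 1) + (x + 4 * y + 2 * z - 3) ^ 2 + 3 * (x + 2 * z - 1) ^ 2 := by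
  unfold q2; ring

theorem twenty_mul_q2 (x y z : R) :
    20 * q2 x y z =
      4 * (6 * z ^ 2 - 3 * z - 4) + (5 * x + 5 * y + 4 * z - 6) ^ 2 + 15 * (x - y) ^ 2 := by
  unfold q2; ring

variable [LinearOrder R] [IsStrictOrderedRing R] {x y z : R}

theorem three_mul_sq_sub_nonpos_of_q2_nonpos (h : q2 x y z ≤ 0) : 3 * x ^ 2 - 3 * x - 1 ≤ 0 := by
  nlinarith [eight_mul_q2 x y z, sq_nonneg (x + 4 * y + 2 * z - 3), sq_nonneg (x + 2 * z - 1)]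

theorem six_mul_sq_sub_nonpos_of_q2_nonpos (h : q2 x y z ≤ 0) : 6 * z ^ 2 - 3 * z - 4 ≤ 0 := by
  nlinarith [twenty_mul_q2 x y z, sq_nonneg (5 * x + 5 * y + 4 * z - 6), sq_nonneg (x - y)]

end Quadric

theorem Int.eq_zero_or_eq_one_of_mul_sub_one_lt_two {n : ℤ} (h : n * (n - 1) < 2) :
    n = 0 ∨ n = 1 := by
  have : -1 < n := by nlinarith
  have : n < 2 := by nlinarith
  omega

theorem coords_eq_zero_or_one_of_q2_nonpos {x y z : ℤ} (h : q2 x y z ≤ 0) :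
    (x = 0 ∨ x = 1) ∧ (y = 0 ∨ y = 1) ∧ (z = 0 ∨ z = 1) := by
  have hx := three_mul_sq_sub_nonpos_of_q2_nonpos h
  have hy := three_mul_sq_sub_nonpos_of_q2_nonpos (q2_swap x y z ▸ h)
  have hz := six_mul_sq_sub_nonpos_of_q2_nonpos h
  refine ⟨?_, ?_, ?_⟩ <;> apply Int.eq_zero_or_eq_one_of_mul_sub_one_lt_two <;> nlinarith

theorem q2_nonpos_iff {x y z : ℤ} :
    q2 x y z ≤ 0 ↔ (x, y, z) ∈ ({(1,1,0), (1,0,0), (0,1,0), (0,0,1)} : Set (ℤ × ℤ × ℤ)) := by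
  constructor
  · intro h
    obtain ⟨rfl | rfl, rfl | rfl, rfl | rfl⟩ := coords_eq_zero_or_one_of_q2_nonpos h <;>
      simp_all [q2]
  · simp only [Set.mem_insert_iff, Set.mem_singleton_iff, Prod.mk.injEq]
    rintro (⟨rfl, rfl, rfl⟩ | ⟨rfl, rfl, rfl⟩ | ⟨rfl, rfl, rfl⟩ | ⟨rfl, rfl, rfl⟩) <;> norm_num [q2]

theorem lattice_points_of_ellipsoid_Q2 :
    {v : ℤ × ℤ × ℤ | 2 * v.1 ^ 2 + 2 * v.2.1 ^ 2 + 2 * v.2.2 ^ 2 + v.1 * v.2.1 + 2 * v.1 * v.2.2 + 2 * v.2.1 * v.2.2 - 3 * v.1 - 3 * v.2.1 - 3 * v.2.2 + 1 ≤ 0} =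
      ({(1,1,0), (1,0,0), (0,1,0), (0,0,1)} : Set (ℤ × ℤ × ℤ)) ∧
    ∀ v ∈ ({(1,1,0), (1,0,0), (0,1,0), (0,0,1)} : Set (ℤ × ℤ × ℤ)),
      2 * v.1 ^ 2 + 2 * v.2.1 ^ 2 + 2 * v.2.2 ^ 2 + v.1 * v.2.1 + 2 * v.1 * v.2.2 + 2 * v.2.1 * v.2.2 - 3 * v.1 - 3 * v.2.1 - 3 * v.2.2 + 1 = 0 := by
  refine ⟨Set.ext fun ⟨x, y, z⟩ => q2_nonpos_iff, ?_⟩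
  rintro v (rfl | rfl | rfl | rfl) <;> norm_num
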